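/- arXiv:0904.4541 — 3 statements merged into one kernel-verified Lean document; each statement's English description precedes it below -/
import Mathlib

section
/- Let U, V, X, Y be binary-or-finite random variables with U, V, X all binary, satisfying the Markov chain (U,V) → X → Y, with X = U ⊕ V (mod-2 sum). Suppose p(Y=y|X=0) > 0 and p(Y=y|X=1) > 0 for all y, neither U, V, nor X is constant, the channel from X to Y has nonzero capacity (equivalently, the rows of the transition matrix P(y|x) are distinct), and the conditional joint pmf satisfies I(U;V|Y) = 0 (U and V are conditionally independent given Y). Then a contradiction arises; i.e., no such distribution exists. -/
/-- XOR case of the proposition: if `(U,V) → X → Y` with `X = U ⊕ V`, all channel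
entries positive, none of `U`, `V`, `X` constant, the channel has nonzero capacity
(two outputs giving different posteriors of `X`), and `U ⟂ V` given `Y`, then we
reach a contradiction.  Here `a u v = P(U=u, V=v)` and `Q x y = P(Y=y | X=x)`, so
the joint pmf is `p(u,v,y) = a u v · Q (u ⊕ v) y`. -/
theorem xor_case_contradiction {Y : Type*} [Fintype Y]
    (a : Bool → Bool → ℝ) (Q : Bool → Y → ℝ)
    (ha : ∀ u v, 0 ≤ a u v) (hasum : ∑ u, ∑ v, a u v = 1)
    (hQpos : ∀ x y, 0 < Q x y) (hQsum : ∀ x, ∑ y, Q x y = 1)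
    -- U, V, X = U ⊕ V are all nonconstant:
    (hU : 0 < ∑ v, a false v ∧ 0 < ∑ v, a true v)
    (hV : 0 < ∑ u, a u false ∧ 0 < ∑ u, a u true)
    (hX : 0 < a false false + a true true ∧ 0 < a false true + a true false)
    -- nonzero capacity: two outputs with different posterior probabilities of X = 1:
    (hcap : ∃ y₁ y₂ : Y,
      ((a false true + a true false) * Q true y₁)
          / ((a false false + a true true) * Q false y₁
              + (a false true + a true false) * Q true y₁)
        ≠ ((a false true + a true false) * Q true y₂)
          / ((a false false + a true true) * Q false y₂
              + (a false true + a true false) * Q true y₂))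
    -- conditional independence of U and V given Y:
    (hCI : ∀ y : Y, ∀ u v : Bool,
      (a u v * Q (xor u v) y) * (∑ u', ∑ v', a u' v' * Q (xor u' v') y)
        = (∑ v', a u v' * Q (xor u v') y) * (∑ u', a u' v * Q (xor u' v) y)) :
    False := by
  obtain ⟨y₁, y₂, hne⟩ := hcap
  set s := a false false with hs
  set b := a false true with hb
  set c := a true false with hc
  set t := a true true with ht
  -- key identity: for every y, s*t*(Q false y)^2 = b*c*(Q true y)^2
  have key : ∀ y : Y, s * t * (Q false y)^2 = b * c * (Q true y)^2 := by
    intro y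
    have h := hCI y false false
    simp only [Fintype.sum_bool, Bool.xor_true, Bool.xor_false, Bool.not_true,
      Bool.not_false] at h
    nlinarith [h]
  have q01 := hQpos false y₁
  have q11 := hQpos true y₁
  have q02 := hQpos false y₂
  have q12 := hQpos true y₂
  rcases eq_or_lt_of_le (mul_nonneg (ha false false) (ha true true)) with hst | hst
  · -- s * t = 0, hence b * c = 0
    have hbc : b * c = 0 := by
      have := key y₁
      rw [← hst] at this
      have h2 : b * c * (Q true y₁)^2 = 0 := by linarith
      have := pow_pos q11 2
      nlinarith
    have hst0 : s * t = 0 := hst.symm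
    rcases mul_eq_zero.mp hst0 with h1 | h1 <;> rcases mul_eq_zero.mp hbc with h2 | h2
    · -- s = 0, b = 0 : U constant
      have := hU.1
      simp only [Fintype.sum_bool, ← hs, ← hb] at this
      nlinarith
    · -- s = 0, c = 0 : V constant
      have := hV.1
      simp only [Fintype.sum_bool, ← hs, ← hc] at this
      nlinarith
    · -- t = 0, b = 0 : V constant
      have := hV.2
      simp only [Fintype.sum_bool, ← ht, ← hb] at this
      nlinarith
    · -- t = 0, c = 0 : U constant
      have := hU.2
      simp only [Fintype.sum_bool, ← ht, ← hc] at this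
      nlinarith
  · -- s * t > 0, hence b * c > 0 and the likelihood ratio is constant
    have hbc : 0 < b * c := by
      have := key y₁
      nlinarith [pow_pos q01 2, pow_pos q11 2]
    have k1 := key y₁
    have k2 := key y₂
    -- derive (Q true y₁ * Q false y₂)^2 = (Q true y₂ * Q false y₁)^2
    have hsq : (Q true y₁ * Q false y₂)^2 = (Q true y₂ * Q false y₁)^2 := by
      have h : b * c * (Q true y₁ * Q false y₂)^2 = b * c * (Q true y₂ * Q false y₁)^2 := by
        nlinarith [k1, k2]
      exact mul_left_cancel₀ (ne_of_gt hbc) h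
    have hratio : Q true y₁ * Q false y₂ = Q true y₂ * Q false y₁ := by
      have h1 : 0 ≤ Q true y₁ * Q false y₂ := le_of_lt (mul_pos q11 q02)
      have h2 : 0 ≤ Q true y₂ * Q false y₁ := le_of_lt (mul_pos q12 q01)
      exact (sq_eq_sq₀ h1 h2).mp hsq
    apply hne
    have d1 : 0 < (s + t) * Q false y₁ + (b + c) * Q true y₁ := by
      have := hX.1; have := hX.2
      positivity
    have d2 : 0 < (s + t) * Q false y₂ + (b + c) * Q true y₂ := by
      have := hX.1; have := hX.2
      positivity
    rw [div_eq_div_iff (ne_of_gt d1) (ne_of_gt d2)]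
    linear_combination (s + t) * (b + c) * hratio
end

section
/- Let U, V, X, Y be random variables with U, V, X binary, satisfying (U,V) → X → Y, with X = U ∧ V (logical AND). Suppose p(Y=y|X=0) > 0 and p(Y=y|X=1) > 0 for all y, neither U, V, nor X is constant, the rows of the channel P(y|x) are linearly independent, and U and V are conditionally independent given Y. Then a contradiction arises; i.e., no such distribution exists. -/
/-- AND case of the proposition: if `(U,V) → X → Y` with `X = U ∧ V`, all channel
entries positive, none of `U`, `V`, `X` constant, the channel rows are linearly
independent (two outputs giving different posteriors of `X`), and `U ⟂ V` given
`Y`, then we reach a contradiction.  Here `a u v = P(U=u, V=v)` and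
`Q x y = P(Y=y | X=x)`, so the joint pmf is `p(u,v,y) = a u v · Q (u && v) y`. -/
theorem and_case_contradiction {Y : Type*} [Fintype Y]
    (a : Bool → Bool → ℝ) (Q : Bool → Y → ℝ)
    (ha : ∀ u v, 0 ≤ a u v) (hasum : ∑ u, ∑ v, a u v = 1)
    (hQpos : ∀ x y, 0 < Q x y) (hQsum : ∀ x, ∑ y, Q x y = 1)
    -- U, V, X = U ∧ V are all nonconstant:
    (hU : 0 < ∑ v, a false v ∧ 0 < ∑ v, a true v)
    (hV : 0 < ∑ u, a u false ∧ 0 < ∑ u, a u true)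
    (hX : 0 < a false false + a false true + a true false ∧ 0 < a true true)
    -- linearly independent channel rows: two outputs with different posteriors of X = 1:
    (hcap : ∃ y₁ y₂ : Y,
      (a true true * Q true y₁)
          / ((a false false + a false true + a true false) * Q false y₁
              + a true true * Q true y₁)
        ≠ (a true true * Q true y₂)
          / ((a false false + a false true + a true false) * Q false y₂
              + a true true * Q true y₂))
    -- conditional independence of U and V given Y:
    (hCI : ∀ y : Y, ∀ u v : Bool,
      (a u v * Q (u && v) y) * (∑ u', ∑ v', a u' v' * Q (u' && v') y)
        = (∑ v', a u v' * Q (u && v') y) * (∑ u', a u' v * Q (u' && v) y)) :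
    False := by
  obtain ⟨y₁, y₂, hne⟩ := hcap
  -- key identity: a00 * a11 * Q true y = a10 * a01 * Q false y for all y
  have key : ∀ y : Y, a false false * a true true * Q true y
      = a true false * a false true * Q false y := by
    intro y
    have h := hCI y true true
    simp only [Fintype.sum_bool, Bool.and_true, Bool.and_false, Bool.true_and,
      Bool.false_and] at h
    have hq := (hQpos false y).ne'
    have h2 : Q false y * (a false false * a true true * Q true y)
        = Q false y * (a true false * a false true * Q false y) := by nlinarith [h]
    exact mul_left_cancel₀ hq h2
  rcases eq_or_lt_of_le (ha false false) with h00 | h00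
  · -- a00 = 0 : then a10 * a01 = 0
    have h0 : a true false * a false true * Q false y₁ = 0 := by
      have := key y₁; rw [← h00] at this; linarith
    have h0' : a true false * a false true = 0 := by
      rcases mul_eq_zero.1 h0 with h | h
      · exact h
      · exact absurd h (hQpos false y₁).ne'
    rcases mul_eq_zero.1 h0' with h10 | h01
    · have := hV.1
      simp only [Fintype.sum_bool] at this
      rw [h10, ← h00] at this; linarith
    · have := hU.1
      simp only [Fintype.sum_bool] at this
      rw [h01, ← h00] at this; linarith
  · -- a00 > 0 : posteriors are equal, contradiction
    apply hne
    have hs : 0 ≤ a false false + a false true + a true false := by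
      have := ha false false; have := ha false true; have := ha true false; linarith
    have hD : ∀ y : Y, 0 < (a false false + a false true + a true false) * Q false y
        + a true true * Q true y := by
      intro y
      have h1 := mul_nonneg hs (hQpos false y).le
      have h2 := mul_pos hX.2 (hQpos true y)
      linarith
    rw [div_eq_div_iff (hD y₁).ne' (hD y₂).ne']
    have hr : Q true y₁ * Q false y₂ = Q true y₂ * Q false y₁ := by
      have h1 := key y₁
      have h2 := key y₂
      have hne00 : a false false * a true true ≠ 0 := (mul_pos h00 hX.2).ne'
      apply mul_left_cancel₀ hne00
      linear_combination Q false y₂ * h1 - Q false y₁ * h2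
    linear_combination
      a true true * (a false false + a false true + a true false) * hr
end

section
/- Fix a channel q(y,z|x) on finite alphabets and nonnegative weights λ₁,...,λ₆. For fixed p(u,v,w), the function p(x|u,v,w) ↦ λ₁I(W;Y) + λ₂I(W;Z) + λ₃I(UW;Y) + λ₄I(VW;Z) + λ₅(I(U;Y|W)+I(V;Z|W)−I(U;V|W)+I(W;Y)) + λ₆(I(U;Y|W)+I(V;Z|W)−I(U;V|W)+I(W;Z)) is convex in the conditional pmf p(x|u,v,w) (with the joint law given by p(u,v,w)p(x|u,v,w)q(y,z|x)). In particular its maximum over conditional pmfs is attained at a point where p(x|u,v,w) ∈ {0,1} whenever p(u,v,w) > 0, i.e., where H(X|U,V,W) = 0. -/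
open Finset

/-- Entropy (base 2) of the marginal of a joint pmf `j` under the map `f`. -/
noncomputable def margEnt {Ω β : Type*} [Fintype Ω] [Fintype β] [DecidableEq β]
    (j : Ω → ℝ) (f : Ω → β) : ℝ :=
  -∑ b : β, (∑ ω ∈ univ.filter (fun ω => f ω = b), j ω) *
      Real.logb 2 (∑ ω ∈ univ.filter (fun ω => f ω = b), j ω)

/-! ### Auxiliary lemmas -/

/-- `x log x - x log y`, the integrand of relative entropy (natural log). -/
noncomputable def mePhi (x y : ℝ) : ℝ := x * Real.log x - x * Real.log y

lemma mePhi_point {x y X Y : ℝ} (hx : 0 ≤ x) (hxy : x ≤ y) (hX : 0 < X) (hY : 0 < Y) :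
    x - y * X / Y ≤ x * Real.log x - x * Real.log y - (x * Real.log X - x * Real.log Y) := by
  rcases eq_or_lt_of_le hx with h | hxpos
  · rw [← h]
    simp only [zero_mul, zero_sub, sub_zero, sub_self, zero_sub, neg_nonpos]
    have : 0 ≤ y := le_trans hx hxy
    positivity
  · have hy : 0 < y := lt_of_lt_of_le hxpos hxy
    have h1 : Real.log ((y * X) / (x * Y)) ≤ (y * X) / (x * Y) - 1 :=
      Real.log_le_sub_one_of_pos (by positivity)
    have h2 : Real.log ((y * X) / (x * Y)) = Real.log y + Real.log X - (Real.log x + Real.log Y) := by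
      rw [Real.log_div (by positivity) (by positivity), Real.log_mul hy.ne' hX.ne',
        Real.log_mul hxpos.ne' hY.ne']
    rw [h2] at h1
    have h3 := mul_le_mul_of_nonneg_left h1 hx
    have h4 : x * ((y * X) / (x * Y) - 1) = y * X / Y - x := by
      field_simp
    nlinarith [h3, h4]

lemma mePhi_subadd {x1 y1 x2 y2 : ℝ} (hx1 : 0 ≤ x1) (h1 : x1 ≤ y1) (hx2 : 0 ≤ x2) (h2 : x2 ≤ y2) :
    mePhi (x1 + x2) (y1 + y2) ≤ mePhi x1 y1 + mePhi x2 y2 := by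
  rcases eq_or_lt_of_le (by positivity : (0:ℝ) ≤ x1 + x2) with hX | hX
  · have hx1' : x1 = 0 := by linarith
    have hx2' : x2 = 0 := by linarith
    simp [mePhi, hx1', hx2']
  · have hY : (0:ℝ) < y1 + y2 := lt_of_lt_of_le hX (by linarith)
    have k1 := mePhi_point hx1 h1 hX hY
    have k2 := mePhi_point hx2 h2 hX hY
    have hsum : (x1 - y1 * (x1 + x2) / (y1 + y2)) + (x2 - y2 * (x1 + x2) / (y1 + y2)) = 0 := by
      field_simp
      ring
    simp only [mePhi]
    have expand : (x1 + x2) * Real.log (x1 + x2) - (x1 + x2) * Real.log (y1 + y2)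
        = (x1 * Real.log (x1+x2) - x1 * Real.log (y1+y2))
          + (x2 * Real.log (x1+x2) - x2 * Real.log (y1+y2)) := by ring
    rw [expand]
    linarith [k1, k2]

lemma mePhi_homog {a x y : ℝ} (ha : 0 ≤ a) (hx : 0 ≤ x) (hxy : x ≤ y) :
    mePhi (a * x) (a * y) = a * mePhi x y := by
  rcases eq_or_lt_of_le ha with h | ha
  · simp [mePhi, ← h]
  rcases eq_or_lt_of_le hx with h | hx
  · simp [mePhi, ← h]
  have hy : 0 < y := lt_of_lt_of_le hx hxy
  simp only [mePhi]
  rw [Real.log_mul ha.ne' hx.ne', Real.log_mul ha.ne' hy.ne']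
  ring

lemma mePhi_combo {a b x1 y1 x2 y2 : ℝ} (ha : 0 ≤ a) (hb : 0 ≤ b)
    (hx1 : 0 ≤ x1) (h1 : x1 ≤ y1) (hx2 : 0 ≤ x2) (h2 : x2 ≤ y2) :
    mePhi (a * x1 + b * x2) (a * y1 + b * y2) ≤ a * mePhi x1 y1 + b * mePhi x2 y2 := by
  calc mePhi (a * x1 + b * x2) (a * y1 + b * y2)
      ≤ mePhi (a * x1) (a * y1) + mePhi (b * x2) (b * y2) :=
        mePhi_subadd (by positivity) (by nlinarith) (by positivity) (by nlinarith)
    _ = a * mePhi x1 y1 + b * mePhi x2 y2 := by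
        rw [mePhi_homog ha hx1 h1, mePhi_homog hb hx2 h2]

/-- Marginal of `j` under `f`. -/
noncomputable def meMarg {Ω β : Type*} [Fintype Ω] [Fintype β] [DecidableEq β]
    (j : Ω → ℝ) (f : Ω → β) (b : β) : ℝ :=
  ∑ ω ∈ univ.filter (fun ω => f ω = b), j ω

lemma margEnt_eq {Ω β : Type*} [Fintype Ω] [Fintype β] [DecidableEq β]
    (j : Ω → ℝ) (f : Ω → β) :
    margEnt j f = -∑ b : β, meMarg j f b * Real.logb 2 (meMarg j f b) := rfl

lemma meMarg_nonneg {Ω β : Type*} [Fintype Ω] [Fintype β] [DecidableEq β]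
    {j : Ω → ℝ} (hj : ∀ ω, 0 ≤ j ω) (f : Ω → β) (b : β) : 0 ≤ meMarg j f b :=
  Finset.sum_nonneg fun ω _ => hj ω

lemma meMarg_fiber {Ω E B : Type*} [Fintype Ω] [Fintype E] [Fintype B]
    [DecidableEq E] [DecidableEq B]
    (j : Ω → ℝ) {g : Ω → B} {h : Ω → E} {π : E → B} (hfac : ∀ ω, g ω = π (h ω)) (b : B) :
    meMarg j g b = ∑ e ∈ univ.filter (fun e => π e = b), meMarg j h e := by
  simp only [meMarg, Finset.sum_filter]
  have key : ∀ a : E, (if π a = b then ∑ ω : Ω, if h ω = a then j ω else 0 else 0)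
      = ∑ ω : Ω, (if h ω = a then (if π a = b then j ω else 0) else 0) := by
    intro a; split_ifs with hp
    · rfl
    · simp [hp]
  rw [Finset.sum_congr rfl fun a _ => key a, Finset.sum_comm]
  refine Finset.sum_congr rfl fun ω _ => ?_
  rw [Finset.sum_ite_eq univ (h ω) (fun a => if π a = b then j ω else 0)]
  simp [hfac ω]

lemma meMarg_le_proj {Ω E B : Type*} [Fintype Ω] [Fintype E] [Fintype B]
    [DecidableEq E] [DecidableEq B]
    {j : Ω → ℝ} (hj : ∀ ω, 0 ≤ j ω) {g : Ω → B} {h : Ω → E} {π : E → B}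
    (hfac : ∀ ω, g ω = π (h ω)) (e : E) :
    meMarg j h e ≤ meMarg j g (π e) := by
  rw [meMarg_fiber j hfac]
  refine Finset.single_le_sum (f := fun e => meMarg j h e)
    (fun e' _ => meMarg_nonneg hj h e') ?_
  simp

lemma meMarg_linear {Ω β : Type*} [Fintype Ω] [Fintype β] [DecidableEq β]
    (j1 j2 : Ω → ℝ) (a b : ℝ) (f : Ω → β) (e : β) :
    meMarg (fun ω => a * j1 ω + b * j2 ω) f e = a * meMarg j1 f e + b * meMarg j2 f e := by
  simp [meMarg, Finset.mul_sum, Finset.sum_add_distrib]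

/-- `x logb 2 x - x logb 2 y`. -/
noncomputable def mePhib (x y : ℝ) : ℝ := x * Real.logb 2 x - x * Real.logb 2 y

lemma mePhib_eq (x y : ℝ) : mePhib x y = mePhi x y / Real.log 2 := by
  simp only [mePhib, mePhi, Real.logb, div_eq_mul_inv]; ring

lemma mePhib_combo {a b x1 y1 x2 y2 : ℝ} (ha : 0 ≤ a) (hb : 0 ≤ b)
    (hx1 : 0 ≤ x1) (h1 : x1 ≤ y1) (hx2 : 0 ≤ x2) (h2 : x2 ≤ y2) :
    mePhib (a * x1 + b * x2) (a * y1 + b * y2) ≤ a * mePhib x1 y1 + b * mePhib x2 y2 := by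
  have h2pos : (0:ℝ) < Real.log 2 := Real.log_pos one_lt_two
  have hkey := mePhi_combo ha hb hx1 h1 hx2 h2
  simp only [mePhib_eq]
  calc mePhi (a * x1 + b * x2) (a * y1 + b * y2) / Real.log 2
      ≤ (a * mePhi x1 y1 + b * mePhi x2 y2) / Real.log 2 := by
        exact div_le_div_of_nonneg_right hkey h2pos.le
    _ = a * (mePhi x1 y1 / Real.log 2) + b * (mePhi x2 y2 / Real.log 2) := by ring

lemma margEnt_sub_eq {Ω E B : Type*} [Fintype Ω] [Fintype E] [Fintype B]
    [DecidableEq E] [DecidableEq B]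
    (j : Ω → ℝ) {g : Ω → B} {h : Ω → E} {π : E → B} (hfac : ∀ ω, g ω = π (h ω)) :
    margEnt j g - margEnt j h = ∑ e : E, mePhib (meMarg j h e) (meMarg j g (π e)) := by
  have hg : ∑ b : B, meMarg j g b * Real.logb 2 (meMarg j g b)
      = ∑ e : E, meMarg j h e * Real.logb 2 (meMarg j g (π e)) := by
    calc ∑ b : B, meMarg j g b * Real.logb 2 (meMarg j g b)
        = ∑ b : B, ∑ e ∈ univ.filter (fun e => π e = b),
            (meMarg j h e * Real.logb 2 (meMarg j g (π e))) := by
          refine Finset.sum_congr rfl fun b _ => ?_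
          rw [meMarg_fiber j hfac b, Finset.sum_mul]
          refine Finset.sum_congr rfl fun e he => ?_
          rw [(Finset.mem_filter.1 he).2, meMarg_fiber j hfac b]
      _ = ∑ e : E, meMarg j h e * Real.logb 2 (meMarg j g (π e)) :=
          Finset.sum_fiberwise univ π _
  rw [margEnt_eq, margEnt_eq, hg]
  simp only [mePhib]
  rw [Finset.sum_sub_distrib]
  ring

lemma piece_le {Ω E B : Type*} [Fintype Ω] [Fintype E] [Fintype B]
    [DecidableEq E] [DecidableEq B]
    (j1 j2 : Ω → ℝ) (hj1 : ∀ ω, 0 ≤ j1 ω) (hj2 : ∀ ω, 0 ≤ j2 ω)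
    {g : Ω → B} {h : Ω → E} {π : E → B} (hfac : ∀ ω, g ω = π (h ω))
    {a b : ℝ} (ha : 0 ≤ a) (hb : 0 ≤ b) :
    margEnt (fun ω => a * j1 ω + b * j2 ω) g - margEnt (fun ω => a * j1 ω + b * j2 ω) h
      ≤ a * (margEnt j1 g - margEnt j1 h) + b * (margEnt j2 g - margEnt j2 h) := by
  rw [margEnt_sub_eq _ hfac, margEnt_sub_eq j1 hfac, margEnt_sub_eq j2 hfac,
    Finset.mul_sum, Finset.mul_sum, ← Finset.sum_add_distrib]
  refine Finset.sum_le_sum fun e _ => ?_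
  rw [meMarg_linear, meMarg_linear]
  exact mePhib_combo ha hb (meMarg_nonneg hj1 h e) (meMarg_le_proj hj1 hfac e)
    (meMarg_nonneg hj2 h e) (meMarg_le_proj hj2 hfac e)

/-- The joint law `p(u,v,w) s(x|u,v,w) q(y,z|x)`. -/
noncomputable def meJ {U V W X Y Z : Type*}
    (p : U × V × W → ℝ) (q : X → Y × Z → ℝ) (s : U × V × W → X → ℝ) :
    (U × V × W) × X × (Y × Z) → ℝ :=
  fun ω => p ω.1 * s ω.1 ω.2.1 * q ω.2.1 ω.2.2

lemma meMarg_base {U V W X Y Z : Type*}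
    [Fintype U] [Fintype V] [Fintype W] [Fintype X] [Fintype Y] [Fintype Z]
    [DecidableEq U] [DecidableEq V] [DecidableEq W]
    (p : U × V × W → ℝ) (q : X → Y × Z → ℝ) (s : U × V × W → X → ℝ)
    (hq : ∀ x, (∑ yz, q x yz) = 1) (hs : ∀ c, (∑ x, s c x) = 1) (c : U × V × W) :
    meMarg (meJ p q s) (fun ω => ω.1) c = p c := by
  have expand : meMarg (meJ p q s) (fun ω : (U × V × W) × X × (Y × Z) => ω.1) c
      = ∑ a : U × V × W, ∑ x : X, ∑ yz : Y × Z,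
          (if a = c then p a * s a x * q x yz else 0) := by
    simp only [meMarg, meJ, Finset.sum_filter]
    rw [Fintype.sum_prod_type]
    refine Finset.sum_congr rfl fun a _ => ?_
    rw [Fintype.sum_prod_type]
  rw [expand]
  have key : ∀ a : U × V × W,
      (∑ x : X, ∑ yz : Y × Z, if a = c then p a * s a x * q x yz else 0)
      = if a = c then p a else 0 := by
    intro a
    split_ifs with hc
    · calc ∑ x : X, ∑ yz : Y × Z, p a * s a x * q x yz
          = ∑ x : X, p a * s a x := by
            refine Finset.sum_congr rfl fun x _ => ?_
            rw [← Finset.mul_sum, hq x, mul_one]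
        _ = p a := by rw [← Finset.mul_sum, hs a, mul_one]
    · simp
  rw [Finset.sum_congr rfl fun a _ => key a, Finset.sum_ite_eq' univ c p]
  simp

lemma margEnt_const {U V W X Y Z E : Type*}
    [Fintype U] [Fintype V] [Fintype W] [Fintype X] [Fintype Y] [Fintype Z] [Fintype E]
    [DecidableEq U] [DecidableEq V] [DecidableEq W] [DecidableEq E]
    (p : U × V × W → ℝ) (q : X → Y × Z → ℝ) (s : U × V × W → X → ℝ)
    (hq : ∀ x, (∑ yz, q x yz) = 1) (hs : ∀ c, (∑ x, s c x) = 1)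
    {g : (U × V × W) × X × (Y × Z) → E} {π' : U × V × W → E}
    (hfac : ∀ ω, g ω = π' ω.1) :
    margEnt (meJ p q s) g = margEnt p π' := by
  have hm : ∀ e, meMarg (meJ p q s) g e = meMarg p π' e := by
    intro e
    rw [meMarg_fiber (meJ p q s) hfac e]
    calc ∑ c ∈ univ.filter (fun c => π' c = e), meMarg (meJ p q s) (fun ω => ω.1) c
        = ∑ c ∈ univ.filter (fun c => π' c = e), p c :=
          Finset.sum_congr rfl fun c _ => meMarg_base p q s hq hs c
      _ = meMarg p π' e := rfl
  rw [margEnt_eq, margEnt_eq]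
  congr 1
  exact Finset.sum_congr rfl fun e _ => by rw [hm e]

noncomputable def martonObjective {U V W X Y Z : Type*}
    [Fintype U] [Fintype V] [Fintype W] [Fintype X] [Fintype Y] [Fintype Z]
    [DecidableEq U] [DecidableEq V] [DecidableEq W] [DecidableEq Y] [DecidableEq Z]
    (p : U × V × W → ℝ) (q : X → Y × Z → ℝ) (l1 l2 l3 l4 l5 l6 : ℝ)
    (s : U × V × W → X → ℝ) : ℝ :=
  let Ω := (U × V × W) × X × (Y × Z)
  let j : Ω → ℝ := fun ω => p ω.1 * s ω.1 ω.2.1 * q ω.2.1 ω.2.2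
  let fU : Ω → U := fun ω => ω.1.1
  let fV : Ω → V := fun ω => ω.1.2.1
  let fW : Ω → W := fun ω => ω.1.2.2
  let fY : Ω → Y := fun ω => ω.2.2.1
  let fZ : Ω → Z := fun ω => ω.2.2.2
  let IWY := margEnt j fW + margEnt j fY - margEnt j (fun ω => (fW ω, fY ω))
  let IWZ := margEnt j fW + margEnt j fZ - margEnt j (fun ω => (fW ω, fZ ω))
  let IUWY := margEnt j (fun ω => (fU ω, fW ω)) + margEnt j fY
      - margEnt j (fun ω => (fU ω, fW ω, fY ω))
  let IVWZ := margEnt j (fun ω => (fV ω, fW ω)) + margEnt j fZ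
      - margEnt j (fun ω => (fV ω, fW ω, fZ ω))
  let IUY_W := margEnt j (fun ω => (fU ω, fW ω)) + margEnt j (fun ω => (fW ω, fY ω))
      - margEnt j (fun ω => (fU ω, fW ω, fY ω)) - margEnt j fW
  let IVZ_W := margEnt j (fun ω => (fV ω, fW ω)) + margEnt j (fun ω => (fW ω, fZ ω))
      - margEnt j (fun ω => (fV ω, fW ω, fZ ω)) - margEnt j fW
  let IUV_W := margEnt j (fun ω => (fU ω, fW ω)) + margEnt j (fun ω => (fV ω, fW ω))
      - margEnt j (fun ω => (fU ω, fV ω, fW ω)) - margEnt j fW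
  l1 * IWY + l2 * IWZ + l3 * IUWY + l4 * IVWZ
    + l5 * (IUY_W + IVZ_W - IUV_W + IWY) + l6 * (IUY_W + IVZ_W - IUV_W + IWZ)

lemma marton_decomp {U V W X Y Z : Type*}
    [Fintype U] [Fintype V] [Fintype W] [Fintype X] [Fintype Y] [Fintype Z]
    [DecidableEq U] [DecidableEq V] [DecidableEq W] [DecidableEq Y] [DecidableEq Z]
    (p : U × V × W → ℝ) (q : X → Y × Z → ℝ) (l1 l2 l3 l4 l5 l6 : ℝ)
    (s : U × V × W → X → ℝ)
    (hq : ∀ x, (∑ yz, q x yz) = 1) (hs : ∀ c, (∑ x, s c x) = 1) :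
    martonObjective p q l1 l2 l3 l4 l5 l6 s =
      l1 * (margEnt p (fun c => c.2.2)
            + (margEnt (meJ p q s) (fun ω => ω.2.2.1)
               - margEnt (meJ p q s) (fun ω => (ω.1.2.2, ω.2.2.1))))
    + l2 * (margEnt p (fun c => c.2.2)
            + (margEnt (meJ p q s) (fun ω => ω.2.2.2)
               - margEnt (meJ p q s) (fun ω => (ω.1.2.2, ω.2.2.2))))
    + l3 * (margEnt p (fun c => (c.1, c.2.2))
            + (margEnt (meJ p q s) (fun ω => ω.2.2.1)
               - margEnt (meJ p q s) (fun ω => (ω.1.1, ω.1.2.2, ω.2.2.1))))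
    + l4 * (margEnt p (fun c => (c.2.1, c.2.2))
            + (margEnt (meJ p q s) (fun ω => ω.2.2.2)
               - margEnt (meJ p q s) (fun ω => (ω.1.2.1, ω.1.2.2, ω.2.2.2))))
    + l5 * ((margEnt (meJ p q s) (fun ω => (ω.1.2.2, ω.2.2.1))
               - margEnt (meJ p q s) (fun ω => (ω.1.1, ω.1.2.2, ω.2.2.1)))
          + (margEnt (meJ p q s) (fun ω => (ω.1.2.2, ω.2.2.2))
               - margEnt (meJ p q s) (fun ω => (ω.1.2.1, ω.1.2.2, ω.2.2.2)))
          + (margEnt (meJ p q s) (fun ω => ω.2.2.1)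
               - margEnt (meJ p q s) (fun ω => (ω.1.2.2, ω.2.2.1)))
          + margEnt p (fun c => (c.1, c.2.1, c.2.2)))
    + l6 * ((margEnt (meJ p q s) (fun ω => (ω.1.2.2, ω.2.2.1))
               - margEnt (meJ p q s) (fun ω => (ω.1.1, ω.1.2.2, ω.2.2.1)))
          + (margEnt (meJ p q s) (fun ω => (ω.1.2.2, ω.2.2.2))
               - margEnt (meJ p q s) (fun ω => (ω.1.2.1, ω.1.2.2, ω.2.2.2)))
          + (margEnt (meJ p q s) (fun ω => ω.2.2.2)
               - margEnt (meJ p q s) (fun ω => (ω.1.2.2, ω.2.2.2)))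
          + margEnt p (fun c => (c.1, c.2.1, c.2.2))) := by
  have hJ : (fun ω : (U × V × W) × X × (Y × Z) => p ω.1 * s ω.1 ω.2.1 * q ω.2.1 ω.2.2)
      = meJ p q s := rfl
  simp only [martonObjective]
  rw [hJ,
    margEnt_const p q s hq hs (g := fun ω => ω.1.2.2)
      (π' := fun c => c.2.2) (fun _ => rfl),
    margEnt_const p q s hq hs (g := fun ω => (ω.1.1, ω.1.2.2))
      (π' := fun c => (c.1, c.2.2)) (fun _ => rfl),
    margEnt_const p q s hq hs (g := fun ω => (ω.1.2.1, ω.1.2.2))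
      (π' := fun c => (c.2.1, c.2.2)) (fun _ => rfl),
    margEnt_const p q s hq hs (g := fun ω => (ω.1.1, ω.1.2.1, ω.1.2.2))
      (π' := fun c => (c.1, c.2.1, c.2.2)) (fun _ => rfl)]
  ring

/-- For fixed `p(u,v,w)` and fixed channel `q(y,z|x)` with nonnegative weights, the
objective is convex in the conditional pmf `p(x|u,v,w)`; consequently its maximum
over conditional pmfs is attained at a deterministic conditional, i.e. one with
`p(x|u,v,w) ∈ {0,1}` wherever `p(u,v,w) > 0` (so that `H(X|U,V,W) = 0`). -/
theorem martonObjective_convex_and_max_at_deterministic {U V W X Y Z : Type*}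
    [Fintype U] [Fintype V] [Fintype W] [Fintype X] [Fintype Y] [Fintype Z]
    [DecidableEq U] [DecidableEq V] [DecidableEq W] [DecidableEq Y] [DecidableEq Z]
    [Nonempty X]
    (p : U × V × W → ℝ) (q : X → Y × Z → ℝ) (l1 l2 l3 l4 l5 l6 : ℝ)
    (hp : ∀ c, 0 ≤ p c) (hpsum : ∑ c, p c = 1)
    (hq : ∀ x, (∀ yz, 0 ≤ q x yz) ∧ (∑ yz, q x yz) = 1)
    (hl1 : 0 ≤ l1) (hl2 : 0 ≤ l2) (hl3 : 0 ≤ l3)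
    (hl4 : 0 ≤ l4) (hl5 : 0 ≤ l5) (hl6 : 0 ≤ l6) :
    ConvexOn ℝ
      {s : U × V × W → X → ℝ | ∀ c, (∀ x, 0 ≤ s c x) ∧ (∑ x, s c x) = 1}
      (martonObjective p q l1 l2 l3 l4 l5 l6)
    ∧ ∃ s ∈ {s : U × V × W → X → ℝ | ∀ c, (∀ x, 0 ≤ s c x) ∧ (∑ x, s c x) = 1},
        (∀ c, 0 < p c → ∀ x, s c x = 0 ∨ s c x = 1) ∧
        ∀ s' ∈ {s : U × V × W → X → ℝ | ∀ c, (∀ x, 0 ≤ s c x) ∧ (∑ x, s c x) = 1},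
          martonObjective p q l1 l2 l3 l4 l5 l6 s'
            ≤ martonObjective p q l1 l2 l3 l4 l5 l6 s := by
  classical
  set S : Set ((U × V × W) → X → ℝ) :=
    {s : U × V × W → X → ℝ | ∀ c, (∀ x, 0 ≤ s c x) ∧ (∑ x, s c x) = 1} with hSdef
  have hq1 : ∀ x, (∑ yz, q x yz) = 1 := fun x => (hq x).2
  have hqn : ∀ x yz, 0 ≤ q x yz := fun x => (hq x).1
  have hSconv : Convex ℝ S := by
    intro s hs t ht a b ha hb hab
    intro c
    refine ⟨fun x => ?_, ?_⟩
    · have h1 := (hs c).1 x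
      have h2 := (ht c).1 x
      simp only [Pi.add_apply, Pi.smul_apply, smul_eq_mul]
      exact add_nonneg (mul_nonneg ha h1) (mul_nonneg hb h2)
    · simp only [Pi.add_apply, Pi.smul_apply, smul_eq_mul]
      rw [Finset.sum_add_distrib, ← Finset.mul_sum, ← Finset.mul_sum, (hs c).2, (ht c).2,
        mul_one, mul_one, hab]
  have hJn : ∀ s, s ∈ S → ∀ ω : (U × V × W) × X × (Y × Z), 0 ≤ meJ p q s ω :=
    fun s hs ω => mul_nonneg (mul_nonneg (hp _) ((hs ω.1).1 _)) (hqn _ _)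
  have key : ∀ s ∈ S, ∀ t ∈ S, ∀ a b : ℝ, 0 ≤ a → 0 ≤ b → a + b = 1 →
      martonObjective p q l1 l2 l3 l4 l5 l6 (a • s + b • t)
        ≤ a * martonObjective p q l1 l2 l3 l4 l5 l6 s
          + b * martonObjective p q l1 l2 l3 l4 l5 l6 t := by
    intro s hs t ht a b ha hb hab
    have hb' : b = 1 - a := by linarith
    subst hb'
    have hst : a • s + (1 - a) • t ∈ S := hSconv hs ht ha hb hab
    have hJc : meJ p q (a • s + (1 - a) • t)
        = fun ω => a * meJ p q s ω + (1 - a) * meJ p q t ω := by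
      funext ω; simp only [meJ, Pi.add_apply, Pi.smul_apply, smul_eq_mul]; ring
    have h1 := piece_le (meJ p q s) (meJ p q t) (hJn s hs) (hJn t ht)
      (g := fun ω : (U × V × W) × X × (Y × Z) => ω.2.2.1)
      (h := fun ω : (U × V × W) × X × (Y × Z) => (ω.1.2.2, ω.2.2.1))
      (π := Prod.snd) (fun _ => rfl) ha hb
    have h2 := piece_le (meJ p q s) (meJ p q t) (hJn s hs) (hJn t ht)
      (g := fun ω : (U × V × W) × X × (Y × Z) => ω.2.2.2)
      (h := fun ω : (U × V × W) × X × (Y × Z) => (ω.1.2.2, ω.2.2.2))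
      (π := Prod.snd) (fun _ => rfl) ha hb
    have h3 := piece_le (meJ p q s) (meJ p q t) (hJn s hs) (hJn t ht)
      (g := fun ω : (U × V × W) × X × (Y × Z) => ω.2.2.1)
      (h := fun ω : (U × V × W) × X × (Y × Z) => (ω.1.1, ω.1.2.2, ω.2.2.1))
      (π := fun e => e.2.2) (fun _ => rfl) ha hb
    have h4 := piece_le (meJ p q s) (meJ p q t) (hJn s hs) (hJn t ht)
      (g := fun ω : (U × V × W) × X × (Y × Z) => ω.2.2.2)
      (h := fun ω : (U × V × W) × X × (Y × Z) => (ω.1.2.1, ω.1.2.2, ω.2.2.2))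
      (π := fun e => e.2.2) (fun _ => rfl) ha hb
    have h5 := piece_le (meJ p q s) (meJ p q t) (hJn s hs) (hJn t ht)
      (g := fun ω : (U × V × W) × X × (Y × Z) => (ω.1.2.2, ω.2.2.1))
      (h := fun ω : (U × V × W) × X × (Y × Z) => (ω.1.1, ω.1.2.2, ω.2.2.1))
      (π := fun e => e.2) (fun _ => rfl) ha hb
    have h6 := piece_le (meJ p q s) (meJ p q t) (hJn s hs) (hJn t ht)
      (g := fun ω : (U × V × W) × X × (Y × Z) => (ω.1.2.2, ω.2.2.2))
      (h := fun ω : (U × V × W) × X × (Y × Z) => (ω.1.2.1, ω.1.2.2, ω.2.2.2))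
      (π := fun e => e.2) (fun _ => rfl) ha hb
    rw [marton_decomp p q l1 l2 l3 l4 l5 l6 _ hq1 (fun c => (hst c).2),
      marton_decomp p q l1 l2 l3 l4 l5 l6 s hq1 (fun c => (hs c).2),
      marton_decomp p q l1 l2 l3 l4 l5 l6 t hq1 (fun c => (ht c).2), hJc]
    linarith [mul_le_mul_of_nonneg_left h1 hl1, mul_le_mul_of_nonneg_left h2 hl2,
      mul_le_mul_of_nonneg_left h3 hl3, mul_le_mul_of_nonneg_left h4 hl4,
      mul_le_mul_of_nonneg_left h5 hl5, mul_le_mul_of_nonneg_left h6 hl5,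
      mul_le_mul_of_nonneg_left h1 hl5, mul_le_mul_of_nonneg_left h5 hl6,
      mul_le_mul_of_nonneg_left h6 hl6, mul_le_mul_of_nonneg_left h2 hl6]
  have hcvx : ConvexOn ℝ S (martonObjective p q l1 l2 l3 l4 l5 l6) :=
    ⟨hSconv, fun s hs t ht a b ha hb hab => by
      simpa using key s hs t ht a b ha hb hab⟩
  refine ⟨hcvx, ?_⟩
  -- deterministic conditionals
  let det : ((U × V × W) → X) → (U × V × W) → X → ℝ := fun g c x => if g c = x then 1 else 0
  have hdetS : ∀ g, det g ∈ S := by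
    intro g c
    refine ⟨fun x => ?_, ?_⟩
    · dsimp [det]; split_ifs <;> norm_num
    · simp [det]
  obtain ⟨g0, -, hg0⟩ := Finset.exists_max_image (univ : Finset ((U × V × W) → X))
    (fun g => martonObjective p q l1 l2 l3 l4 l5 l6 (det g)) Finset.univ_nonempty
  refine ⟨det g0, hdetS g0, fun c _ x => ?_, fun s' hs' => ?_⟩
  · dsimp [det]; split_ifs
    · right; rfl
    · left; rfl
  · have hsub : Set.range det ⊆ S := by rintro _ ⟨g, rfl⟩; exact hdetS g
    have hw0 : ∀ g ∈ (univ : Finset ((U × V × W) → X)), (0:ℝ) ≤ ∏ c, s' c (g c) :=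
      fun g _ => Finset.prod_nonneg fun c _ => (hs' c).1 _
    have hws : ∑ g : (U × V × W) → X, ∏ c, s' c (g c) = 1 := by
      rw [← Fintype.piFinset_univ, ← Finset.prod_univ_sum]
      exact Finset.prod_eq_one fun c _ => (hs' c).2
    have hcm : (univ : Finset ((U × V × W) → X)).centerMass
        (fun g => ∏ c, s' c (g c)) det = s' := by
      rw [Finset.centerMass, hws, inv_one, one_smul]
      funext c x
      simp only [Finset.sum_apply, Pi.smul_apply, smul_eq_mul]
      set FF : (U × V × W) → X → ℝ :=
        fun c' x' => if c' = c then (if x' = x then s' c' x' else 0) else s' c' x' with hFF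
      have core : ∀ g : (U × V × W) → X,
          (∏ c', s' c' (g c')) * det g c x = ∏ c', FF c' (g c') := by
        intro g
        by_cases hgc : g c = x
        · have hd : det g c x = 1 := by simp [det, hgc]
          rw [hd, mul_one]
          refine Finset.prod_congr rfl fun c' _ => ?_
          by_cases hc' : c' = c
          · subst hc'; simp [hFF, hgc]
          · simp [hFF, hc']
        · have hz : FF c (g c) = 0 := by simp [hFF, hgc]
          have hzero : (∏ c', FF c' (g c')) = 0 :=
            Finset.prod_eq_zero (Finset.mem_univ c) hz
          rw [hzero]
          simp [det, hgc]
      rw [Finset.sum_congr rfl fun g _ => core g]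
      rw [← Fintype.piFinset_univ, ← Finset.prod_univ_sum]
      have hcol : ∀ c' : U × V × W, (∑ x' : X, FF c' x') = if c' = c then s' c x else 1 := by
        intro c'
        by_cases hc' : c' = c
        · subst hc'
          simp only [hFF, if_pos rfl]
          rw [Finset.sum_ite_eq' univ x (fun x' => s' c' x')]
          simp
        · simp only [hFF, if_neg hc']
          exact (hs' c').2
      rw [Finset.prod_congr rfl fun c' _ => hcol c',
        Finset.prod_ite_eq' univ c (fun _ => s' c x)]
      simp
    have hmem : s' ∈ convexHull ℝ (Set.range det) := by
      rw [← hcm]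
      exact Finset.centerMass_mem_convexHull _ hw0 (by rw [hws]; norm_num)
        (fun g _ => Set.mem_range_self g)
    obtain ⟨y, hyD, hle⟩ := hcvx.exists_ge_of_mem_convexHull hsub hmem
    obtain ⟨g, rfl⟩ := hyD
    exact le_trans hle (hg0 g (Finset.mem_univ g))
end
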